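/- arXiv:2402.02223 — 3 statements merged into one kernel-verified Lean document; each statement's English description precedes it below -/
import Mathlib

section
/- For a uniformly random r-matching on [rn] and any 1 ≤ k ≤ rn − 1, the expected value of X_k^{(r)} equals k − r·C(k,r)/C(rn−1, r−1), where C denotes the binomial coefficient. -/
open Finset
open scoped Classical

/-- An `r`-matching on `[r*n] = {1,...,r*n}`: a partition of `Finset.Icc 1 (r*n)`
into `r`-element blocks. -/
def IsRMatching (r n : ℕ) (M : Finset (Finset ℕ)) : Prop :=
  (∀ e ∈ M, e.card = r) ∧
  (∀ e ∈ M, ∀ f ∈ M, e ≠ f → Disjoint e f) ∧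
  M.biUnion id = Finset.Icc 1 (r * n)

/-- The finite set of all `r`-matchings on `[r*n]`. -/
noncomputable def matchings (r n : ℕ) : Finset (Finset (Finset ℕ)) :=
  ((Finset.Icc 1 (r * n)).powerset.powerset).filter (IsRMatching r n)

/-- `x_k(M) = Σ_{e ∈ M_k} |e ∩ [k]|`, summed over blocks `e` meeting both `[k]`
and its complement. -/
noncomputable def sockAt (k : ℕ) (M : Finset (Finset ℕ)) : ℕ :=
  ∑ e ∈ M.filter
      (fun e => (e ∩ Finset.Icc 1 k).Nonempty ∧ (e \ Finset.Icc 1 k).Nonempty),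
    (e ∩ Finset.Icc 1 k).card

/-- For `r = 2`: the number of edges with one endpoint in `[k]` and one outside. -/
noncomputable def crossAt (k : ℕ) (M : Finset (Finset ℕ)) : ℕ :=
  (M.filter
      (fun e => (e ∩ Finset.Icc 1 k).Nonempty ∧ (e \ Finset.Icc 1 k).Nonempty)).card

/-- The sock number of a matching on `[2n]`: `max_{1 ≤ k ≤ 2n} x_k(M)`. -/
noncomputable def sockNum (n : ℕ) (M : Finset (Finset ℕ)) : ℕ :=
  (Finset.Icc 1 (2 * n)).sup (fun k => crossAt k M)

/-!
Summing `|e ∩ [k]|` over the blocks of a matching gives `k`; blocks inside `[k]` contribute `r`,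
blocks crossing the cut contribute to `X_k`, the others nothing, so
`X_k = k - r · #{blocks inside [k]}`. Permutations of `[rn]` act on matchings, hence every
`r`-subset of `[rn]` is a block of the same number `c` of matchings, and double counting pairs
(matching, block) gives `C(rn, r) · c = n · #matchings`, i.e. `c = #matchings / C(rn-1, r-1)`.
The expected number of blocks inside `[k]` is therefore `C(k, r) / C(rn-1, r-1)`.
-/

theorem Finset.exists_perm_map_eq {α : Type*} {I S T : Finset α} (hS : S ⊆ I) (hT : T ⊆ I)
    (hST : #S = #T) :
    ∃ σ : Equiv.Perm α, I.map σ.toEmbedding = I ∧ S.map σ.toEmbedding = T := by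
  let e : {x : I // (x : α) ∈ S} ≃ {x : I // (x : α) ∈ T} :=
    (Equiv.subtypeSubtypeEquivSubtype (hS ·)).trans
      ((Finset.equivOfCardEq hST).trans (Equiv.subtypeSubtypeEquivSubtype (hT ·)).symm)
  let σ : Equiv.Perm α := Equiv.Perm.ofSubtype e.extendSubtype
  have map_eq {A B : Finset α} (hAB : ∀ x ∈ A, σ x ∈ B) (hcard : #A = #B) :
      A.map σ.toEmbedding = B :=
    eq_of_subset_of_card_le (fun y hy => by obtain ⟨x, hx, rfl⟩ := mem_map.1 hy; exact hAB x hx)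
      (by rw [card_map, hcard])
  refine ⟨σ, map_eq (fun x hx => ?_) rfl, map_eq (fun x hx => ?_) hST⟩
  · simp only [σ, Equiv.Perm.ofSubtype_apply_of_mem _ hx, coe_mem]
  · rw [Equiv.Perm.ofSubtype_apply_of_mem _ (hS hx)]
    exact e.extendSubtype_mem ⟨x, hS hx⟩ hx

lemma Finset.card_inter_eq_ite {α : Type*} [DecidableEq α] (e I : Finset α) :
    #(e ∩ I) = (if (e ∩ I).Nonempty ∧ (e \ I).Nonempty then #(e ∩ I) else 0) +
      if e ⊆ I then #e else 0 := by
  by_cases heI : e ⊆ I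
  · simp [heI, sdiff_eq_empty_iff_subset.2 heI, inter_eq_left.2 heI]
  · by_cases hmeet : (e ∩ I).Nonempty
    · simp [heI, hmeet, sdiff_nonempty.2 heI]
    · simp [heI, not_nonempty_iff_eq_empty.1 hmeet]

lemma mem_matchings {r n : ℕ} {M : Finset (Finset ℕ)} :
    M ∈ matchings r n ↔ IsRMatching r n M := by
  refine ⟨fun h => (mem_filter.1 h).2, fun h => mem_filter.2 ⟨?_, h⟩⟩
  exact mem_powerset.2 fun e he => mem_powerset.2 (h.2.2 ▸ subset_biUnion_of_mem id he)

namespace IsRMatching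

variable {r n : ℕ} {M : Finset (Finset ℕ)}

lemma subset_Icc (hM : IsRMatching r n M) {e : Finset ℕ} (he : e ∈ M) :
    e ⊆ Icc 1 (r * n) :=
  hM.2.2 ▸ subset_biUnion_of_mem id he

lemma card_eq (hr : 0 < r) (hM : IsRMatching r n M) : #M = n := by
  have h : n * r = #M * r :=
    calc n * r = #(M.biUnion id) := by rw [hM.2.2, Nat.card_Icc, Nat.add_sub_cancel, mul_comm]
      _ = ∑ e ∈ M, #e := card_biUnion hM.2.1
      _ = #M * r := by rw [sum_congr rfl hM.1, sum_const, smul_eq_mul]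
  exact (Nat.eq_of_mul_eq_mul_right hr h).symm

lemma sum_card_inter_Icc (hM : IsRMatching r n M) {k : ℕ} (hk : k ≤ r * n) :
    ∑ e ∈ M, #(e ∩ Icc 1 k) = k := by
  have hdisj : ∀ e ∈ M, ∀ f ∈ M, e ≠ f → Disjoint (e ∩ Icc 1 k) (f ∩ Icc 1 k) :=
    fun e he f hf hef => (hM.2.1 e he f hf hef).mono inter_subset_left inter_subset_left
  rw [← card_biUnion hdisj, ← biUnion_inter, show M.biUnion (fun e => e) = M.biUnion id from rfl,
    hM.2.2, inter_eq_right.2 (Icc_subset_Icc_right hk), Nat.card_Icc, Nat.add_sub_cancel]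

lemma sockAt_add_mul_card_filter_subset (hM : IsRMatching r n M) {k : ℕ} (hk : k ≤ r * n) :
    sockAt k M + r * #{e ∈ M | e ⊆ Icc 1 k} = k := by
  have hinside : ∑ e ∈ M, (if e ⊆ Icc 1 k then #e else 0) = r * #{e ∈ M | e ⊆ Icc 1 k} := by
    rw [← sum_filter, sum_congr rfl fun e he => hM.1 e (mem_filter.1 he).1, sum_const,
      smul_eq_mul, mul_comm]
  calc sockAt k M + r * #{e ∈ M | e ⊆ Icc 1 k} = ∑ e ∈ M, #(e ∩ Icc 1 k) := by
        rw [sockAt, sum_filter, ← hinside, ← sum_add_distrib]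
        exact sum_congr rfl fun e _ => (card_inter_eq_ite e _).symm
    _ = k := hM.sum_card_inter_Icc hk

lemma filter_powersetCard_mem (hM : IsRMatching r n M) (J : Finset ℕ) :
    {S ∈ powersetCard r J | S ∈ M} = {e ∈ M | e ⊆ J} := by
  ext e
  simp only [mem_filter, mem_powersetCard]
  exact ⟨fun h => ⟨h.2, h.1.1⟩, fun h => ⟨⟨h.2, hM.1 e h.1⟩, h.1⟩⟩

lemma map_perm (hM : IsRMatching r n M) {σ : Equiv.Perm ℕ}
    (hσ : (Icc 1 (r * n)).map σ.toEmbedding = Icc 1 (r * n)) :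
    IsRMatching r n (M.map (mapEmbedding σ.toEmbedding).toEmbedding) := by
  refine ⟨?_, ?_, ?_⟩
  · simp only [mem_map, RelEmbedding.coe_toEmbedding, mapEmbedding_apply]
    rintro _ ⟨e, he, rfl⟩
    rw [card_map, hM.1 e he]
  · simp only [mem_map, RelEmbedding.coe_toEmbedding, mapEmbedding_apply]
    rintro _ ⟨e, he, rfl⟩ _ ⟨f, hf, rfl⟩ hef
    exact (disjoint_map _).2 (hM.2.1 e he f hf (by rintro rfl; exact hef rfl))
  · rw [← hσ, ← hM.2.2]
    ext x
    simp

end IsRMatching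

lemma matchings_nonempty (r n : ℕ) : (matchings r n).Nonempty := by
  suffices ∃ M, IsRMatching r n M from this.elim fun M hM => ⟨M, mem_matchings.2 hM⟩
  induction n with
  | zero => exact ⟨∅, by simp [IsRMatching]⟩
  | succ n ih =>
    obtain ⟨M, hM⟩ := ih
    set B := Icc (r * n + 1) (r * n + r)
    have hB : ∀ e ∈ M, Disjoint B e := fun e he =>
      disjoint_left.2 fun x hxB hxe => by
        have := mem_Icc.1 (hM.subset_Icc he hxe)
        have := mem_Icc.1 hxB
        omega
    refine ⟨insert B M, ?_, ?_, ?_⟩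
    · simp only [mem_insert]
      rintro e (rfl | he)
      · rw [Nat.card_Icc]; omega
      · exact hM.1 e he
    · simp only [mem_insert]
      rintro e (rfl | he) f (rfl | hf) hef
      exacts [absurd rfl hef, hB f hf, (hB e he).symm, hM.2.1 e he f hf hef]
    · rw [biUnion_insert, hM.2.2]
      ext x
      simp only [B, id, mem_union, mem_Icc, mul_add, mul_one]
      omega

lemma sum_card_filter_subset {r n : ℕ} (J : Finset ℕ) :
    ∑ M ∈ matchings r n, #{e ∈ M | e ⊆ J} =
      ∑ S ∈ powersetCard r J, #{M ∈ matchings r n | S ∈ M} := by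
  refine (sum_congr rfl fun M hM => ?_).trans
    (sum_card_bipartiteAbove_eq_sum_card_bipartiteBelow (fun M S => S ∈ M))
  rw [bipartiteAbove, (mem_matchings.1 hM).filter_powersetCard_mem]

lemma card_filter_mem_le_of_perm {r n : ℕ} {σ : Equiv.Perm ℕ}
    (hσ : (Icc 1 (r * n)).map σ.toEmbedding = Icc 1 (r * n)) (S : Finset ℕ) :
    #{M ∈ matchings r n | S ∈ M} ≤ #{M ∈ matchings r n | S.map σ.toEmbedding ∈ M} := by
  refine card_le_card_of_injOn (fun M => M.map (mapEmbedding σ.toEmbedding).toEmbedding)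
    (fun M hM => ?_) (map_injective _).injOn
  simp only [coe_filter, Set.mem_ofPred_eq, mem_matchings] at hM ⊢
  exact ⟨hM.1.map_perm hσ, (mem_map' _).2 hM.2⟩

lemma card_filter_mem_matchings_congr {r n : ℕ} {S T : Finset ℕ}
    (hS : S ∈ powersetCard r (Icc 1 (r * n))) (hT : T ∈ powersetCard r (Icc 1 (r * n))) :
    #{M ∈ matchings r n | S ∈ M} = #{M ∈ matchings r n | T ∈ M} := by
  rw [mem_powersetCard] at hS hT
  obtain ⟨σ, hσI, hσS⟩ := exists_perm_map_eq hS.1 hT.1 (hS.2.trans hT.2.symm)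
  obtain ⟨τ, hτI, hτT⟩ := exists_perm_map_eq hT.1 hS.1 (hT.2.trans hS.2.symm)
  exact le_antisymm (hσS ▸ card_filter_mem_le_of_perm hσI S)
    (hτT ▸ card_filter_mem_le_of_perm hτI T)

lemma sum_card_filter_subset_Icc {r n k : ℕ} (hk : k ≤ r * n) {S : Finset ℕ}
    (hS : S ∈ powersetCard r (Icc 1 (r * n))) :
    ∑ M ∈ matchings r n, #{e ∈ M | e ⊆ Icc 1 k} = k.choose r * #{M ∈ matchings r n | S ∈ M} := by
  rw [sum_card_filter_subset, sum_congr rfl fun T hT => card_filter_mem_matchings_congr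
    (powersetCard_mono (Icc_subset_Icc_right hk) hT) hS, sum_const, card_powersetCard,
    Nat.card_Icc, Nat.add_sub_cancel, smul_eq_mul]

lemma choose_mul_card_filter_mem_matchings {r n : ℕ} (hr : 0 < r) (hn : 0 < n)
    {S : Finset ℕ} (hS : S ∈ powersetCard r (Icc 1 (r * n))) :
    (r * n - 1).choose (r - 1) * #{M ∈ matchings r n | S ∈ M} = #(matchings r n) := by
  have hcount : n * #(matchings r n) = (r * n).choose r * #{M ∈ matchings r n | S ∈ M} := by
    rw [← sum_card_filter_subset_Icc le_rfl hS, sum_congr rfl fun M hM => by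
      rw [filter_true_of_mem fun e => (mem_matchings.1 hM).subset_Icc,
        (mem_matchings.1 hM).card_eq hr], sum_const, smul_eq_mul, mul_comm]
  have hrn : 0 < r * n := Nat.mul_pos hr hn
  have hchoose : r * n * (r * n - 1).choose (r - 1) = (r * n).choose r * r := by
    have := Nat.add_one_mul_choose_eq (r * n - 1) (r - 1)
    rwa [Nat.sub_add_cancel hrn, Nat.sub_add_cancel hr] at this
  apply Nat.eq_of_mul_eq_mul_left hrn
  calc r * n * ((r * n - 1).choose (r - 1) * #{M ∈ matchings r n | S ∈ M})
      = r * ((r * n).choose r * #{M ∈ matchings r n | S ∈ M}) := by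
        rw [← mul_assoc, hchoose]; ring
    _ = r * n * #(matchings r n) := by rw [← hcount]; ring

lemma sum_sockAt_add_mul_sum_card_filter_subset {r n k : ℕ} (hk : k ≤ r * n) :
    ∑ M ∈ matchings r n, sockAt k M + r * ∑ M ∈ matchings r n, #{e ∈ M | e ⊆ Icc 1 k} =
      k * #(matchings r n) := by
  rw [mul_sum, ← sum_add_distrib, sum_congr rfl fun M hM =>
    (mem_matchings.1 hM).sockAt_add_mul_card_filter_subset hk, sum_const, smul_eq_mul, mul_comm]

theorem stmt4_general (r n k : ℕ) (hk : 1 ≤ k) (hk' : k ≤ r * n - 1) :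
    (∑ M ∈ matchings r n, (sockAt k M : ℚ)) / (matchings r n).card =
      (k : ℚ) - (r * k.choose r : ℚ) / ((r * n - 1).choose (r - 1)) := by
  have hrn : 0 < r * n := by omega
  have hr : 0 < r := Nat.pos_of_mul_pos_right hrn
  have hn : 0 < n := Nat.pos_of_mul_pos_left hrn
  have hS : Icc 1 r ∈ powersetCard r (Icc 1 (r * n)) :=
    mem_powersetCard.2 ⟨Icc_subset_Icc_right (Nat.le_mul_of_pos_right r hn), by simp⟩
  set c := #{M ∈ matchings r n | Icc 1 r ∈ M}
  have hN : (r * n - 1).choose (r - 1) * c = #(matchings r n) :=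
    choose_mul_card_filter_mem_matchings hr hn hS
  have hpos : 0 < (r * n - 1).choose (r - 1) * c := hN ▸ card_pos.2 (matchings_nonempty r n)
  have hchoose : ((r * n - 1).choose (r - 1) : ℚ) ≠ 0 := by
    exact_mod_cast (Nat.pos_of_mul_pos_right hpos).ne'
  have hc : (c : ℚ) ≠ 0 := by exact_mod_cast (Nat.pos_of_mul_pos_left hpos).ne'
  have hsum : ∑ M ∈ matchings r n, (sockAt k M : ℚ) =
      k * #(matchings r n) - r * (k.choose r * c) := by
    have h := sum_sockAt_add_mul_sum_card_filter_subset (r := r) (n := n) (k := k) (by omega)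
    rw [sum_card_filter_subset_Icc (by omega) hS] at h
    rw [eq_sub_iff_add_eq]
    exact_mod_cast h
  rw [hsum, ← hN]
  push_cast
  field_simp

theorem stmt4 (r n k : ℕ) (hr : 2 ≤ r) (hn : 1 ≤ n) (hk : 1 ≤ k) (hk' : k ≤ r * n - 1) :
    (∑ M ∈ matchings r n, (sockAt k M : ℚ)) / (matchings r n).card =
      (k : ℚ) - (r * k.choose r : ℚ) / ((r * n - 1).choose (r - 1)) :=
  stmt4_general r n k hk hk'
end

section
/- For a uniformly random r-matching on [rn] and 1 ≤ k ≤ rn−1, E(X_k^{(r)}) satisfies the bounds k(1 − (k/(rn))^{r−1}) ≤ E(X_k^{(r)}) ≤ k(1 − ((k−r)/(rn−r))^{r−1}), the upper bound holding when k ≥ r. -/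
open Finset
open scoped Classical

/-!
Every point of `[k]` lies in exactly one block of `M`, so `x_k(M) + r · #{e ∈ M | e ⊆ [k]} = k`.
The number of `r`-matchings of a set depends only on its size (induct on the block through a
fixed point, which can be chosen in `C(|s| - 1, r - 1)` ways), hence a fixed `r`-set is a block
of a uniform matching of `[rn]` with probability `1 / C(rn - 1, r - 1)`, and
`E x_k = k - r C(k, r) / C(rn - 1, r - 1) = k (1 - C(k - 1, r - 1) / C(rn - 1, r - 1))`.
The last ratio is the product of the `r - 1` factors `(k - 1 - i) / (rn - 1 - i)`, and each factor
lies between `(k - r) / (rn - r)` and `k / (rn)`.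
-/

section ChooseRatio

variable {K : Type*} [Field K] [LinearOrder K] [IsStrictOrderedRing K]

lemma sub_div_sub_le_sub_div_sub {x y c d : K} (hxy : x ≤ y) (hcd : c ≤ d) (hdy : d < y) :
    (x - d) / (y - d) ≤ (x - c) / (y - c) := by
  rw [div_le_div_iff₀ (by linarith) (by linarith)]
  nlinarith [mul_le_mul_of_nonneg_left hxy (sub_nonneg.2 hcd)]

lemma Nat.cast_choose_div_cast_choose {a b j : ℕ} (hja : j ≤ a) (hjb : j ≤ b) :
    (a.choose j : K) / b.choose j = ∏ i ∈ range j, ((a : K) - i) / ((b : K) - i) := by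
  have hdesc (m : ℕ) (hjm : j ≤ m) :
      (m.choose j : K) = (∏ i ∈ range j, ((m : K) - i)) / (j.factorial : K) := by
    rw [eq_div_iff (by positivity), mul_comm, ← Nat.cast_mul,
      ← Nat.descFactorial_eq_factorial_mul_choose, Nat.descFactorial_eq_prod_range,
      Nat.cast_prod]
    exact prod_congr rfl fun i hi => Nat.cast_sub (by simp at hi; omega)
  rw [hdesc a hja, hdesc b hjb, div_div_div_cancel_right₀ (by positivity), prod_div_distrib]

lemma Nat.cast_choose_div_cast_choose_le_pow {a b j : ℕ} (hab : a ≤ b) :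
    (a.choose j : K) / b.choose j ≤ (((a : K) + 1) / (b + 1)) ^ j := by
  rcases lt_or_ge a j with haj | hja
  · rw [Nat.choose_eq_zero_of_lt haj, Nat.cast_zero, zero_div]
    positivity
  rw [Nat.cast_choose_div_cast_choose hja (hja.trans hab), pow_eq_prod_const]
  have hab : (a : K) ≤ b := by exact_mod_cast hab
  refine Finset.prod_le_prod (fun i hi => ?_) (fun i hi => ?_) <;>
    have hi : (i : K) + 1 ≤ a := by exact_mod_cast (mem_range.1 hi).trans_le hja
  · exact div_nonneg (by linarith) (by linarith)
  · simpa using sub_div_sub_le_sub_div_sub (by linarith : (a : K) + 1 ≤ b + 1)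
      (by positivity : (0 : K) ≤ i + 1) (by linarith)

lemma Nat.pow_le_cast_choose_div_cast_choose {a b j : ℕ} (hja : j ≤ a) (hab : a ≤ b)
    (hjb : j < b) :
    (((a : K) - j) / (b - j)) ^ j ≤ (a.choose j : K) / b.choose j := by
  rw [Nat.cast_choose_div_cast_choose hja (hja.trans hab), pow_eq_prod_const]
  have hja : (j : K) ≤ a := by exact_mod_cast hja
  have hjb : (j : K) < b := by exact_mod_cast hjb
  refine Finset.prod_le_prod (fun i hi => div_nonneg (by linarith) (by linarith)) (fun i hi => ?_)
  exact sub_div_sub_le_sub_div_sub (by exact_mod_cast hab)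
    (by exact_mod_cast (mem_range.1 hi).le) hjb

end ChooseRatio

section Matchings

variable {α : Type*} [DecidableEq α] {r : ℕ} {s A : Finset α} {M : Finset (Finset α)}

def IsMatchingOn (r : ℕ) (s : Finset α) (M : Finset (Finset α)) : Prop :=
  (∀ e ∈ M, e.card = r) ∧ (∀ e ∈ M, ∀ f ∈ M, e ≠ f → Disjoint e f) ∧ M.biUnion id = s

noncomputable def matchingsOn (r : ℕ) (s : Finset α) : Finset (Finset (Finset α)) :=
  s.powerset.powerset.filter (IsMatchingOn r s)

lemma IsMatchingOn.subset (hM : IsMatchingOn r s M) {e : Finset α} (he : e ∈ M) : e ⊆ s :=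
  hM.2.2 ▸ subset_biUnion_of_mem id he

@[simp]
lemma mem_matchingsOn : M ∈ matchingsOn r s ↔ IsMatchingOn r s M := by
  refine ⟨fun h => (mem_filter.1 h).2, fun h => mem_filter.2 ⟨?_, h⟩⟩
  simpa [subset_iff] using fun e he => h.subset he

lemma matchings_eq_matchingsOn (r n : ℕ) : matchings r n = matchingsOn r (Icc 1 (r * n)) := rfl

lemma IsMatchingOn.insert {e : Finset α} (he : e ⊆ s) (hec : e.card = r)
    (hM : IsMatchingOn r (s \ e) M) : IsMatchingOn r s (insert e M) := by
  obtain ⟨hcard, hdisj, hcover⟩ := hM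
  have hdisj_e (f) (hf : f ∈ M) : Disjoint e f :=
    disjoint_sdiff_self_right.mono_right (hcover ▸ subset_biUnion_of_mem id hf)
  refine ⟨?_, ?_, ?_⟩
  · simpa [hec] using hcard
  · simp only [mem_insert]
    rintro f (rfl | hf) g (rfl | hg) hfg
    exacts [absurd rfl hfg, hdisj_e g hg, (hdisj_e f hf).symm, hdisj f hf g hg hfg]
  · rw [biUnion_insert, hcover, id, union_sdiff_of_subset he]

lemma IsMatchingOn.erase (hM : IsMatchingOn r s M) {e : Finset α} (he : e ∈ M) :
    IsMatchingOn r (s \ e) (M.erase e) := by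
  obtain ⟨hcard, hdisj, hcover⟩ := hM
  refine ⟨fun f hf => hcard f (mem_of_mem_erase hf),
    fun f hf g hg => hdisj f (mem_of_mem_erase hf) g (mem_of_mem_erase hg), ?_⟩
  rw [← hcover, ← insert_erase he, biUnion_insert, erase_insert_eq_erase, erase_eq_self.2,
    id, union_sdiff_cancel_left]
  · exact (disjoint_biUnion_right _ _ _).2 fun f hf =>
      hdisj e he f (mem_of_mem_erase hf) (ne_of_mem_erase hf).symm
  · exact notMem_erase e M

lemma card_filter_mem_matchingsOn (hr : 0 < r) {e : Finset α} (he : e ⊆ s) (hec : e.card = r) :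
    ((matchingsOn r s).filter (e ∈ ·)).card = (matchingsOn r (s \ e)).card := by
  have he_notMem {N : Finset (Finset α)} (hN : IsMatchingOn r (s \ e) N) : e ∉ N := fun heN => by
    obtain ⟨x, hx⟩ := card_pos.1 (hec ▸ hr)
    exact (mem_sdiff.1 (hN.subset heN hx)).2 hx
  refine card_bij' (fun M _ => M.erase e) (fun N _ => insert e N) ?_ ?_ ?_ ?_
  · intro M hM
    simp only [mem_filter, mem_matchingsOn] at hM ⊢
    exact hM.1.erase hM.2
  · intro N hN
    simp only [mem_filter, mem_matchingsOn] at hN ⊢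
    exact ⟨hN.insert he hec, mem_insert_self e N⟩
  · intro M hM
    exact insert_erase (mem_filter.1 hM).2
  · intro N hN
    exact erase_insert (he_notMem (mem_matchingsOn.1 hN))

lemma sum_card_filter_mem_eq_mul (hr : 0 < r) {P : Finset (Finset α)} {c : ℕ}
    (hP : ∀ e ∈ P, e ⊆ s ∧ e.card = r) (hc : ∀ e ∈ P, (matchingsOn r (s \ e)).card = c) :
    ∑ M ∈ matchingsOn r s, (P.filter (· ∈ M)).card = P.card * c := by
  refine (sum_card_bipartiteAbove_eq_sum_card_bipartiteBelow (fun M e => e ∈ M)).trans ?_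
  refine sum_const_nat fun e he => ?_
  rw [← hc e he, ← card_filter_mem_matchingsOn hr (hP e he).1 (hP e he).2]
  rfl

lemma IsMatchingOn.card_filter_mem_eq_one (hM : IsMatchingOn r s M) {a : α} (ha : a ∈ s) :
    (((s.powersetCard r).filter ({a} ⊆ ·)).filter (· ∈ M)).card = 1 := by
  obtain ⟨e, he, hae⟩ := mem_biUnion.1 (hM.2.2 ▸ ha)
  refine card_eq_one.2 ⟨e, eq_singleton_iff_unique_mem.2 ⟨?_, ?_⟩⟩
  · exact mem_filter.2 ⟨mem_filter.2 ⟨mem_powersetCard.2 ⟨hM.subset he, hM.1 e he⟩,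
      singleton_subset_iff.2 hae⟩, he⟩
  · simp only [mem_filter, singleton_subset_iff]
    rintro f ⟨⟨-, haf⟩, hf⟩
    by_contra hfe
    exact disjoint_left.1 (hM.2.1 f hf e he hfe) haf hae

lemma card_matchingsOn_eq_choose_mul_of_forall (hr : 0 < r) {a : α} (ha : a ∈ s) {c : ℕ}
    (hc : ∀ e ⊆ s, e.card = r → a ∈ e → (matchingsOn r (s \ e)).card = c) :
    (matchingsOn r s).card = (s.card - 1).choose (r - 1) * c := by
  have hPa : ∀ e ∈ (s.powersetCard r).filter ({a} ⊆ ·), e ⊆ s ∧ e.card = r := fun e he =>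
    mem_powersetCard.1 (mem_filter.1 he).1
  have key := sum_card_filter_mem_eq_mul hr hPa fun e he =>
    hc e (hPa e he).1 (hPa e he).2 (singleton_subset_iff.1 (mem_filter.1 he).2)
  rwa [sum_congr rfl fun M hM => (mem_matchingsOn.1 hM).card_filter_mem_eq_one ha,
    card_filter_powersetCard_subset _ _ _ (singleton_subset_iff.2 ha) (by rwa [card_singleton]),
    card_singleton, sum_const, smul_eq_mul, mul_one] at key

lemma card_matchingsOn_congr (hr : 0 < r) {t : Finset α} (hst : s.card = t.card) :
    (matchingsOn r s).card = (matchingsOn r t).card := by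
  induction hn : s.card using Nat.strong_induction_on generalizing s t with
  | _ n ih =>
  obtain rfl | ⟨a, ha⟩ := s.eq_empty_or_nonempty
  · rw [card_eq_zero.1 (hst.symm.trans card_empty)]
  have hn0 : 0 < n := hn ▸ card_pos.2 ⟨a, ha⟩
  obtain ⟨b, hb⟩ : t.Nonempty := card_pos.1 (by omega)
  -- by induction, `v \ e` has as many matchings as the reference set `u` whenever `|v| = n`
  obtain ⟨u, -, hu⟩ := exists_subset_card_eq (Nat.sub_le s.card r)
  have hsub {v e : Finset α} (hv : v.card = n) (he : e ⊆ v) (hec : e.card = r) :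
      (matchingsOn r (v \ e)).card = (matchingsOn r u).card :=
    ih (n - r) (by omega) (by rw [card_sdiff_of_subset he]; omega)
      (by rw [card_sdiff_of_subset he]; omega)
  rw [card_matchingsOn_eq_choose_mul_of_forall hr ha fun e he hec _ => hsub hn he hec,
    card_matchingsOn_eq_choose_mul_of_forall hr hb fun e he hec _ => hsub (hst ▸ hn) he hec, hst]

lemma card_matchingsOn_eq_choose_mul (hr : 0 < r) {a : α} (ha : a ∈ s) {t : Finset α}
    (ht : t.card = s.card - r) :
    (matchingsOn r s).card = (s.card - 1).choose (r - 1) * (matchingsOn r t).card :=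
  card_matchingsOn_eq_choose_mul_of_forall hr ha fun e he hec _ =>
    card_matchingsOn_congr hr (by rw [card_sdiff_of_subset he, hec, ht])

lemma sum_card_filter_subset_s12 (hr : 0 < r) (hA : A ⊆ s) {t : Finset α}
    (ht : t.card = s.card - r) :
    ∑ M ∈ matchingsOn r s, (M.filter (· ⊆ A)).card =
      A.card.choose r * (matchingsOn r t).card := by
  have hP : ∀ e ∈ A.powersetCard r, e ⊆ s ∧ e.card = r := fun e he =>
    ⟨((mem_powersetCard.1 he).1).trans hA, (mem_powersetCard.1 he).2⟩
  rw [← card_powersetCard, ← sum_card_filter_mem_eq_mul hr hP fun e he =>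
    card_matchingsOn_congr hr (by rw [card_sdiff_of_subset (hP e he).1, (hP e he).2, ht])]
  refine sum_congr rfl fun M hM => congrArg card (ext fun e => ?_)
  have := (mem_matchingsOn.1 hM).1 e
  simp only [mem_filter, mem_powersetCard]
  tauto

lemma matchingsOn_nonempty {m : ℕ} (hs : s.card = r * m) : (matchingsOn r s).Nonempty := by
  induction m generalizing s with
  | zero => exact ⟨∅, by simp_all [IsMatchingOn]⟩
  | succ m ih =>
    obtain ⟨e, he, hec⟩ := exists_subset_card_eq (show r ≤ s.card by rw [hs, Nat.mul_succ]; omega)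
    obtain ⟨N, hN⟩ := ih (s := s \ e) (by rw [card_sdiff_of_subset he, hs, hec, Nat.mul_succ]; simp)
    exact ⟨insert e N, mem_matchingsOn.2 ((mem_matchingsOn.1 hN).insert he hec)⟩

lemma card_inter_eq_crossing_add (e A : Finset α) :
    (e ∩ A).card = (if (e ∩ A).Nonempty ∧ (e \ A).Nonempty then (e ∩ A).card else 0) +
      if e ⊆ A then e.card else 0 := by
  by_cases heA : e ⊆ A
  · simp [heA, inter_eq_left.2 heA, sdiff_eq_empty_iff_subset.2 heA]
  · by_cases hmeet : (e ∩ A).Nonempty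
    · simp [heA, hmeet, sdiff_nonempty.2 heA]
    · simp [heA, not_nonempty_iff_eq_empty.1 hmeet]

lemma IsMatchingOn.sum_card_inter (hM : IsMatchingOn r s M) (hA : A ⊆ s) :
    ∑ e ∈ M, (e ∩ A).card = A.card := by
  rw [← card_biUnion fun e he f hf hef =>
    (hM.2.1 e he f hf hef).mono inter_subset_left inter_subset_left, ← biUnion_inter,
    show M.biUnion (fun e => e) = s from hM.2.2, inter_eq_right.2 hA]

lemma IsMatchingOn.sum_crossing_add_mul_card_filter_subset (hM : IsMatchingOn r s M)
    (hA : A ⊆ s) :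
    ∑ e ∈ M.filter (fun e => (e ∩ A).Nonempty ∧ (e \ A).Nonempty), (e ∩ A).card +
      r * (M.filter (· ⊆ A)).card = A.card := by
  have hblocks : ∑ e ∈ M.filter (· ⊆ A), e.card = r * (M.filter (· ⊆ A)).card := by
    rw [sum_congr rfl fun e he => hM.1 e (mem_filter.1 he).1, sum_const, smul_eq_mul, mul_comm]
  rw [← hblocks, sum_filter, sum_filter, ← sum_add_distrib, ← hM.sum_card_inter hA]
  exact sum_congr rfl fun e _ => (card_inter_eq_crossing_add e A).symm

end Matchings

lemma Nat.mul_choose_eq_mul_choose_pred {n k : ℕ} (hk : 0 < k) :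
    k * n.choose k = n * (n - 1).choose (k - 1) := by
  obtain ⟨k, rfl⟩ := Nat.exists_eq_add_of_lt hk
  cases n with
  | zero => simp
  | succ n => simpa [mul_comm] using (Nat.add_one_mul_choose_eq n k).symm

lemma sockAt_add_mul_card_filter_subset {r n k : ℕ} (hk : k ≤ r * n) {M : Finset (Finset ℕ)}
    (hM : M ∈ matchingsOn r (Icc 1 (r * n))) :
    sockAt k M + r * (M.filter (· ⊆ Icc 1 k)).card = k := by
  have := (mem_matchingsOn.1 hM).sum_crossing_add_mul_card_filter_subset
    (Icc_subset_Icc le_rfl hk)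
  rwa [Nat.card_Icc, Nat.add_sub_cancel] at this

lemma sum_sockAt_div_card_matchings {r n k : ℕ} (hr : 0 < r) (hn : 0 < n) (hk : k ≤ r * n) :
    (∑ M ∈ matchings r n, (sockAt k M : ℚ)) / (matchings r n).card =
      k * (1 - ((k - 1).choose (r - 1) : ℚ) / (r * n - 1).choose (r - 1)) := by
  set t := range (r * n - r)
  have ht : t.card = (Icc 1 (r * n)).card - r := by simp [t]
  have hcard : (matchingsOn r (Icc 1 (r * n))).card =
      (r * n - 1).choose (r - 1) * (matchingsOn r t).card := by
    simpa using card_matchingsOn_eq_choose_mul hr (a := 1) (by simp; nlinarith) ht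
  have hsum := sum_congr rfl fun M hM => sockAt_add_mul_card_filter_subset hk hM
  rw [sum_add_distrib, ← mul_sum, sum_card_filter_subset_s12 hr (Icc_subset_Icc le_rfl hk) ht,
    Nat.card_Icc, Nat.add_sub_cancel, ← mul_assoc, Nat.mul_choose_eq_mul_choose_pred hr,
    sum_const, smul_eq_mul, hcard] at hsum
  have hN : 0 < (matchingsOn r t).card :=
    card_pos.2 (matchingsOn_nonempty (m := n - 1) (by simp [t, Nat.mul_sub_one]))
  have hD : 0 < (r * n - 1).choose (r - 1) := Nat.choose_pos (by
    have := Nat.le_mul_of_pos_right r hn; omega)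
  have hsumQ := congrArg (Nat.cast (R := ℚ)) hsum
  push_cast at hsumQ
  rw [matchings_eq_matchingsOn, hcard, eq_sub_of_add_eq hsumQ]
  push_cast
  field_simp

theorem stmt12 (r n k : ℕ) (hr : 2 ≤ r) (hn : 1 ≤ n) (hk : 1 ≤ k) (hk' : k ≤ r * n - 1) :
    (k : ℚ) * (1 - ((k : ℚ) / (r * n)) ^ (r - 1)) ≤
        (∑ M ∈ matchings r n, (sockAt k M : ℚ)) / (matchings r n).card ∧
      (r ≤ k →
        (∑ M ∈ matchings r n, (sockAt k M : ℚ)) / (matchings r n).card ≤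
          (k : ℚ) * (1 - (((k : ℚ) - r) / ((r : ℚ) * n - r)) ^ (r - 1))) := by
  have hkn : k < r * n := by omega
  rw [sum_sockAt_div_card_matchings (by omega) hn hkn.le]
  have hk1 : ((k - 1 : ℕ) : ℚ) = k - 1 := by rw [Nat.cast_sub hk, Nat.cast_one]
  have hrn1 : ((r * n - 1 : ℕ) : ℚ) = r * n - 1 := by
    rw [Nat.cast_sub (by omega), Nat.cast_mul, Nat.cast_one]
  have hr1 : ((r - 1 : ℕ) : ℚ) = r - 1 := by rw [Nat.cast_sub (by omega), Nat.cast_one]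
  constructor
  · gcongr k * (1 - ?_)
    have := Nat.cast_choose_div_cast_choose_le_pow (K := ℚ) (j := r - 1)
      (show k - 1 ≤ r * n - 1 by omega)
    rwa [hk1, hrn1, sub_add_cancel, sub_add_cancel] at this
  · intro hrk
    gcongr k * (1 - ?_)
    have := Nat.pow_le_cast_choose_div_cast_choose (K := ℚ) (show r - 1 ≤ k - 1 by omega)
      (show k - 1 ≤ r * n - 1 by omega) (by omega)
    rwa [hk1, hrn1, hr1, sub_sub_sub_cancel_right, sub_sub_sub_cancel_right] at this
end

section
/- The number of matchings on [2n] with sock number exactly 2 equals 3^{n−1} − 1 for n ≥ 1. -/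
open Finset
open scoped Classical

lemma crossP_iff {a b k : ℕ} (ha : 1 ≤ a) (hab : a < b) :
    ((({a,b} : Finset ℕ) ∩ Finset.Icc 1 k).Nonempty ∧
      (({a,b}:Finset ℕ) \ Finset.Icc 1 k).Nonempty) ↔ (a ≤ k ∧ k < b) := by
  constructor
  · rintro ⟨⟨u, hu⟩, ⟨v, hv⟩⟩
    simp only [mem_inter, mem_insert, mem_singleton, mem_sdiff, mem_Icc] at hu hv
    obtain ⟨hu1, hu2⟩ := hu
    obtain ⟨hv1, hv2⟩ := hv
    rcases hu1 with rfl | rfl <;> rcases hv1 with rfl | rfl <;> omega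
  · intro h
    refine ⟨⟨a, ?_⟩, ⟨b, ?_⟩⟩ <;>
        simp only [mem_inter, mem_insert, mem_singleton, mem_sdiff, mem_Icc]
    · exact ⟨Or.inl trivial, by omega⟩
    · exact ⟨Or.inr trivial, by omega⟩

section basic
variable {n : ℕ} {M : Finset (Finset ℕ)}

lemma edge_subset (h : IsRMatching 2 n M) {e : Finset ℕ} (he : e ∈ M) :
    e ⊆ Finset.Icc 1 (2 * n) := by
  intro x hx
  rw [← h.2.2]
  exact mem_biUnion.mpr ⟨e, he, hx⟩

lemma exists_edge (h : IsRMatching 2 n M) {v : ℕ} (hv : v ∈ Finset.Icc 1 (2 * n)) :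
    ∃ e ∈ M, v ∈ e := by
  rw [← h.2.2] at hv
  exact mem_biUnion.mp hv

lemma edge_uniq (h : IsRMatching 2 n M) {e f : Finset ℕ} (he : e ∈ M) (hf : f ∈ M)
    {v : ℕ} (hve : v ∈ e) (hvf : v ∈ f) : e = f := by
  by_contra hne
  exact absurd hvf (Finset.disjoint_left.mp (h.2.1 e he f hf hne) hve)

noncomputable def pmate (M : Finset (Finset ℕ)) (v : ℕ) : ℕ :=
  (((M.filter (fun e => v ∈ e)).biUnion id).erase v).sup id

lemma pmate_eq (h : IsRMatching 2 n M) {v w : ℕ} (hvw : ({v, w} : Finset ℕ) ∈ M)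
    (hne : v ≠ w) : pmate M v = w := by
  have hfil : M.filter (fun e => v ∈ e) = {({v,w} : Finset ℕ)} := by
    ext e
    simp only [mem_filter, mem_singleton]
    constructor
    · rintro ⟨he, hve⟩
      exact edge_uniq h he hvw hve (by simp)
    · rintro rfl
      exact ⟨hvw, by simp⟩
  rw [pmate, hfil]
  have : (({({v,w} : Finset ℕ)} : Finset (Finset ℕ)).biUnion id) = {v, w} := by
    simp
  rw [this]
  have : ({v, w} : Finset ℕ).erase v = {w} :=
    Finset.erase_insert (by simp [hne])
  rw [this]
  simp

lemma pmate_spec (h : IsRMatching 2 n M) {v : ℕ} (hv : v ∈ Finset.Icc 1 (2 * n)) :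
    ({v, pmate M v} : Finset ℕ) ∈ M ∧ pmate M v ≠ v ∧ pmate M v ∈ Finset.Icc 1 (2 * n) := by
  obtain ⟨e, he, hve⟩ := exists_edge h hv
  obtain ⟨a, b, hab, rfl⟩ := Finset.card_eq_two.mp (h.1 e he)
  have hm : v = a ∨ v = b := by simpa using hve
  rcases hm with rfl | rfl
  · have := pmate_eq h he hab
    rw [this]
    refine ⟨he, hab.symm, edge_subset h he (by simp)⟩
  · have hvw : ({v, a} : Finset ℕ) ∈ M := by rwa [Finset.pair_comm]
    have := pmate_eq h hvw (Ne.symm hab)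
    rw [this]
    exact ⟨hvw, hab, edge_subset h he (by simp)⟩

lemma crossAt_zero_of_ge (h : IsRMatching 2 n M) {k : ℕ} (hk : 2 * n ≤ k) :
    crossAt k M = 0 := by
  rw [crossAt, Finset.card_eq_zero, Finset.filter_eq_empty_iff]
  intro e he
  rintro ⟨-, x, hx⟩
  rw [mem_sdiff, mem_Icc] at hx
  have := mem_Icc.mp (edge_subset h he hx.1)
  omega

lemma crossAt_le_card (k : ℕ) (M : Finset (Finset ℕ)) : crossAt k M ≤ M.card :=
  Finset.card_filter_le _ _

lemma sockNum_le_iff {t : ℕ} :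
    sockNum n M ≤ t ↔ ∀ k ∈ Finset.Icc 1 (2 * n), crossAt k M ≤ t :=
  Finset.sup_le_iff

lemma crossAt_le_sockNum {k : ℕ} (hk : k ∈ Finset.Icc 1 (2 * n)) :
    crossAt k M ≤ sockNum n M := by
  rw [sockNum]; exact Finset.le_sup (f := fun k => crossAt k M) hk

end basic

noncomputable def good (n t : ℕ) : Finset (Finset (Finset ℕ)) :=
  (matchings 2 n).filter (fun M => sockNum n M ≤ t)

lemma mem_good {n t : ℕ} {M : Finset (Finset ℕ)} :
    M ∈ good n t ↔ IsRMatching 2 n M ∧ sockNum n M ≤ t := by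
  rw [good, mem_filter, mem_matchings]

lemma sockNum_le_card (n : ℕ) (M : Finset (Finset ℕ)) : sockNum n M ≤ M.card :=
  Finset.sup_le (fun k _ => crossAt_le_card k M)

lemma two_le_crossAt {M : Finset (Finset ℕ)} {k : ℕ} {e1 e2 : Finset ℕ}
    (h1 : e1 ∈ M.filter (fun e => (e ∩ Finset.Icc 1 k).Nonempty ∧ (e \ Finset.Icc 1 k).Nonempty))
    (h2 : e2 ∈ M.filter (fun e => (e ∩ Finset.Icc 1 k).Nonempty ∧ (e \ Finset.Icc 1 k).Nonempty))
    (hne : e1 ≠ e2) : 2 ≤ crossAt k M :=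
  Finset.one_lt_card.mpr ⟨e1, h1, e2, h2, hne⟩

lemma three_le_crossAt {M : Finset (Finset ℕ)} {k : ℕ} {e1 e2 e3 : Finset ℕ}
    (h1 : e1 ∈ M.filter (fun e => (e ∩ Finset.Icc 1 k).Nonempty ∧ (e \ Finset.Icc 1 k).Nonempty))
    (h2 : e2 ∈ M.filter (fun e => (e ∩ Finset.Icc 1 k).Nonempty ∧ (e \ Finset.Icc 1 k).Nonempty))
    (h3 : e3 ∈ M.filter (fun e => (e ∩ Finset.Icc 1 k).Nonempty ∧ (e \ Finset.Icc 1 k).Nonempty))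
    (h12 : e1 ≠ e2) (h13 : e1 ≠ e3) (h23 : e2 ≠ e3) : 3 ≤ crossAt k M := by
  have hc : ({e1, e2, e3} : Finset (Finset ℕ)).card = 3 :=
    Finset.card_eq_three.mpr ⟨e1, e2, e3, h12, h13, h23, rfl⟩
  rw [crossAt, ← hc]
  apply Finset.card_le_card
  intro x hx
  simp only [mem_insert, mem_singleton] at hx
  rcases hx with rfl | rfl | rfl <;> assumption

lemma good_one {t : ℕ} (ht : 1 ≤ t) : good 1 t = {({({1,2} : Finset ℕ)} : Finset (Finset ℕ))} := by
  ext M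
  rw [mem_good, mem_singleton]
  constructor
  · rintro ⟨hm, -⟩
    have hsub : ∀ e ∈ M, e = ({1,2} : Finset ℕ) := by
      intro e he
      have h1 : e ⊆ Finset.Icc 1 2 := by
        have := edge_subset hm he
        simpa using this
      have h2 : Finset.Icc 1 2 = ({1,2} : Finset ℕ) := by decide
      rw [h2] at h1
      have h3 : ({1,2} : Finset ℕ).card ≤ e.card := by
        rw [hm.1 e he]; decide
      exact Finset.eq_of_subset_of_card_le h1 h3
    obtain ⟨e, he, -⟩ := exists_edge hm (v := 1) (by rw [mem_Icc]; omega)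
    ext f
    simp only [mem_singleton]
    constructor
    · intro hf; exact hsub f hf
    · rintro rfl; rw [← hsub e he]; exact he
  · rintro rfl
    refine ⟨⟨?_, ?_, ?_⟩, ?_⟩
    · intro e he
      simp only [mem_singleton] at he
      subst he; decide
    · intro e he f hf hne
      simp only [mem_singleton] at he hf
      subst he; subst hf; exact absurd rfl hne
    · decide
    · calc sockNum 1 {({1,2} : Finset ℕ)} ≤ ({({1,2} : Finset ℕ)} : Finset (Finset ℕ)).card :=
          sockNum_le_card _ _
        _ ≤ t := by simpa using ht

section j0
variable {n : ℕ} {M M' : Finset (Finset ℕ)}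

lemma new_notmem (h : IsRMatching 2 n M) {e : Finset ℕ} {v : ℕ} (hv : v ∈ e)
    (hbig : 2 * n < v) : e ∉ M := by
  intro he
  have := mem_Icc.mp (edge_subset h he hv)
  omega

lemma j0_matching (h : IsRMatching 2 n M) :
    IsRMatching 2 (n+1) (insert ({2*n+1, 2*n+2} : Finset ℕ) M) := by
  refine ⟨?_, ?_, ?_⟩
  · intro e he
    rcases mem_insert.mp he with rfl | he'
    · rw [Finset.card_pair (by omega)]
    · exact h.1 e he'
  · intro e he f hf hne
    have key : ∀ g ∈ M, Disjoint ({2*n+1, 2*n+2} : Finset ℕ) g := by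
      intro g hg
      rw [Finset.disjoint_left]
      intro z hz hzg
      have := mem_Icc.mp (edge_subset h hg hzg)
      simp only [mem_insert, mem_singleton] at hz
      omega
    rcases mem_insert.mp he with rfl | he' <;> rcases mem_insert.mp hf with rfl | hf'
    · exact absurd rfl hne
    · exact key f hf'
    · exact (key e he').symm
    · exact h.2.1 e he' f hf' hne
  · rw [Finset.biUnion_insert, h.2.2]
    ext z
    simp only [mem_union, id_eq, mem_insert, mem_singleton, mem_Icc]
    omega

lemma sockNum_j0 (h : IsRMatching 2 n M) {t : ℕ} (ht : 1 ≤ t) (hs : sockNum n M ≤ t) :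
    sockNum (n+1) (insert ({2*n+1, 2*n+2} : Finset ℕ) M) ≤ t := by
  rw [sockNum_le_iff]
  intro k hk
  rw [mem_Icc] at hk
  show (Finset.filter _ _).card ≤ t
  rw [Finset.filter_insert]
  have hMk : crossAt k M ≤ t := by
    rcases le_or_gt k (2*n) with h' | h'
    · rcases Nat.eq_zero_or_pos n with rfl | hn
      · rw [crossAt_zero_of_ge h (by omega)]; omega
      · exact le_trans (crossAt_le_sockNum (by rw [mem_Icc]; omega)) hs
    · rw [crossAt_zero_of_ge h (by omega)]; omega
  split_ifs with hc
  · have hk' := (crossP_iff (a := 2*n+1) (b := 2*n+2) (by omega) (by omega)).mp hc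
    have h0 : crossAt k M = 0 := crossAt_zero_of_ge h (by omega)
    rw [Finset.card_insert_of_notMem (fun hmem =>
      new_notmem h (show (2*n+2 : ℕ) ∈ ({2*n+1, 2*n+2} : Finset ℕ) by simp) (by omega)
        (Finset.mem_of_mem_filter _ hmem))]
    rw [crossAt] at h0
    omega
  · exact hMk

lemma i0_matching (h : IsRMatching 2 (n+1) M') (hA : ({2*n+1, 2*n+2} : Finset ℕ) ∈ M') :
    IsRMatching 2 n (M'.erase ({2*n+1, 2*n+2} : Finset ℕ)) := by
  refine ⟨?_, ?_, ?_⟩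
  · intro e he; exact h.1 e (Finset.mem_of_mem_erase he)
  · intro e he f hf hne
    exact h.2.1 e (Finset.mem_of_mem_erase he) f (Finset.mem_of_mem_erase hf) hne
  · ext z
    simp only [mem_biUnion, id_eq, mem_Icc]
    constructor
    · rintro ⟨e, he, hz⟩
      have he' := Finset.mem_of_mem_erase he
      have hz' := mem_Icc.mp (edge_subset h he' hz)
      have hne : e ≠ ({2*n+1, 2*n+2} : Finset ℕ) := Finset.ne_of_mem_erase he
      have h1 : z ≠ 2*n+1 := by
        rintro rfl
        exact hne (edge_uniq h he' hA hz (by simp))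
      have h2 : z ≠ 2*n+2 := by
        rintro rfl
        exact hne (edge_uniq h he' hA hz (by simp))
      omega
    · intro hz
      obtain ⟨e, he, hze⟩ := exists_edge h (v := z) (by rw [mem_Icc]; omega)
      refine ⟨e, Finset.mem_erase_of_ne_of_mem ?_ he, hze⟩
      rintro rfl
      simp only [mem_insert, mem_singleton] at hze
      rcases hze with rfl | rfl <;> omega

lemma sockNum_i0 (h : IsRMatching 2 (n+1) M') {t : ℕ} (hs : sockNum (n+1) M' ≤ t) :
    sockNum n (M'.erase ({2*n+1, 2*n+2} : Finset ℕ)) ≤ t := by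
  rw [sockNum_le_iff]
  intro k hk
  rw [mem_Icc] at hk
  show (Finset.filter _ _).card ≤ t
  rw [Finset.filter_erase]
  calc ((Finset.filter _ M').erase _).card ≤ (Finset.filter _ M').card :=
        Finset.card_le_card (Finset.erase_subset _ _)
    _ ≤ t := le_trans (crossAt_le_sockNum (by rw [mem_Icc]; omega)) hs

lemma last_edge_of_sock_le_one (hn : 1 ≤ n) (h : IsRMatching 2 (n+1) M')
    (hs : sockNum (n+1) M' ≤ 1) : ({2*n+1, 2*n+2} : Finset ℕ) ∈ M' := by
  set p := pmate M' (2*n+2) with hp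
  obtain ⟨hpe, hpne, hpmem⟩ := pmate_spec h (v := 2*n+2) (by rw [mem_Icc]; omega)
  rw [mem_Icc] at hpmem
  by_cases hp1 : p = 2*n+1
  · rw [← hp1]; rwa [Finset.pair_comm]
  set q := pmate M' (2*n+1) with hq
  obtain ⟨hqe, hqne, hqmem⟩ := pmate_spec h (v := 2*n+1) (by rw [mem_Icc]; omega)
  rw [mem_Icc] at hqmem
  by_cases hq1 : q = 2*n+2
  · rw [← hq1]; exact hqe
  exfalso
  have hpd : p ≠ 2*n+2 := hpne
  have hqd : q ≠ 2*n+1 := hqne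
  have hEne : ({2*n+2, p} : Finset ℕ) ≠ ({2*n+1, q} : Finset ℕ) := by
    intro heq
    have : (2*n+2 : ℕ) ∈ ({2*n+1, q} : Finset ℕ) := heq ▸ (by simp)
    simp only [mem_insert, mem_singleton] at this
    omega
  have c1 : (({2*n+2, p} : Finset ℕ) ∩ Finset.Icc 1 (2*n)).Nonempty ∧
      (({2*n+2, p} : Finset ℕ) \ Finset.Icc 1 (2*n)).Nonempty := by
    rw [Finset.pair_comm]
    exact (crossP_iff (by omega) (by omega)).mpr ⟨by omega, by omega⟩
  have c2 : (({2*n+1, q} : Finset ℕ) ∩ Finset.Icc 1 (2*n)).Nonempty ∧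
      (({2*n+1, q} : Finset ℕ) \ Finset.Icc 1 (2*n)).Nonempty := by
    rw [Finset.pair_comm]
    exact (crossP_iff (by omega) (by omega)).mpr ⟨by omega, by omega⟩
  have := two_le_crossAt (Finset.mem_filter.mpr ⟨hpe, c1⟩) (Finset.mem_filter.mpr ⟨hqe, c2⟩) hEne
  have := le_trans (crossAt_le_sockNum (k := 2*n) (n := n+1) (by rw [mem_Icc]; omega)) hs
  omega

end j0

lemma step1 {n : ℕ} (hn : 1 ≤ n) : (good (n+1) 1).card = (good n 1).card := by
  refine Finset.card_bij' (fun M' _ => M'.erase ({2*n+1, 2*n+2} : Finset ℕ))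
    (fun M _ => insert ({2*n+1, 2*n+2} : Finset ℕ) M) ?_ ?_ ?_ ?_
  · intro M' hM'
    rw [mem_good] at hM' ⊢
    obtain ⟨hm, hs⟩ := hM'
    exact ⟨i0_matching hm (last_edge_of_sock_le_one hn hm hs), sockNum_i0 hm hs⟩
  · intro M hM
    rw [mem_good] at hM ⊢
    obtain ⟨hm, hs⟩ := hM
    exact ⟨j0_matching hm, sockNum_j0 hm le_rfl hs⟩
  · intro M' hM'
    rw [mem_good] at hM'
    exact Finset.insert_erase (last_edge_of_sock_le_one hn hM'.1 hM'.2)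
  · intro M hM
    rw [mem_good] at hM
    exact Finset.erase_insert (new_notmem hM.1
      (show (2*n+2 : ℕ) ∈ ({2*n+1, 2*n+2} : Finset ℕ) by simp) (by omega))

lemma card_good_one {n : ℕ} (hn : 1 ≤ n) : (good n 1).card = 1 := by
  induction n, hn using Nat.le_induction with
  | base => rw [good_one le_rfl]; simp
  | succ m hm ih => rw [step1 hm, ih]

section surgery
variable {n : ℕ} {M M' : Finset (Finset ℕ)}

lemma pair_ne_left {a b c d : ℕ} (h1 : a ≠ c) (h2 : a ≠ d) :
    ({a, b} : Finset ℕ) ≠ ({c, d} : Finset ℕ) := by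
  intro hEq
  have : a ∈ ({c, d} : Finset ℕ) := hEq ▸ (by simp)
  simp only [mem_insert, mem_singleton] at this
  tauto

lemma pair_ne_right {a b c d : ℕ} (h1 : b ≠ c) (h2 : b ≠ d) :
    ({a, b} : Finset ℕ) ≠ ({c, d} : Finset ℕ) := by
  intro hEq
  have : b ∈ ({c, d} : Finset ℕ) := hEq ▸ (by simp)
  simp only [mem_insert, mem_singleton] at this
  tauto

lemma pair_notmem_left (h : IsRMatching 2 n M) {a b : ℕ} (ha : 2*n < a) :
    ({a, b} : Finset ℕ) ∉ M :=
  new_notmem h (by simp) ha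

lemma pair_notmem_right (h : IsRMatching 2 n M) {a b : ℕ} (hb : 2*n < b) :
    ({a, b} : Finset ℕ) ∉ M :=
  new_notmem h (by simp) hb

lemma classify (hn : 1 ≤ n) (h : IsRMatching 2 (n+1) M') (hs : sockNum (n+1) M' ≤ 2)
    (hA : ({2*n+1, 2*n+2} : Finset ℕ) ∉ M') (hB : ({2*n, 2*n+2} : Finset ℕ) ∉ M') :
    ({2*n, 2*n+1} : Finset ℕ) ∈ M' := by
  obtain ⟨hpe, hpne, hpmem⟩ := pmate_spec h (v := 2*n+2) (by rw [mem_Icc]; omega)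
  set p := pmate M' (2*n+2) with hp
  rw [mem_Icc] at hpmem
  have hp1 : p ≠ 2*n+1 := by
    rintro hq
    rw [hq] at hpe
    rw [Finset.pair_comm] at hpe
    exact hA hpe
  have hp0 : p ≠ 2*n := by
    rintro hq
    rw [hq] at hpe
    rw [Finset.pair_comm] at hpe
    exact hB hpe
  obtain ⟨hqe, hqne, hqmem⟩ := pmate_spec h (v := 2*n+1) (by rw [mem_Icc]; omega)
  set q := pmate M' (2*n+1) with hq
  rw [mem_Icc] at hqmem
  have hq2 : q ≠ 2*n+2 := by
    rintro hq2
    rw [hq2] at hqe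
    exact hA hqe
  by_cases hq0 : q = 2*n
  · rw [hq0] at hqe
    rwa [Finset.pair_comm] at hqe
  obtain ⟨hre, hrne, hrmem⟩ := pmate_spec h (v := 2*n) (by rw [mem_Icc]; omega)
  set r := pmate M' (2*n) with hr
  rw [mem_Icc] at hrmem
  by_cases hr1 : r = 2*n+1
  · rw [hr1] at hre
    exact hre
  have hr2 : r ≠ 2*n+2 := by
    rintro hr2
    rw [hr2] at hre
    exact hB hre
  exfalso
  -- three distinct edges crossing k = 2*n-1
  have hk : (2*n-1 : ℕ) ∈ Finset.Icc 1 (2*(n+1)) := by rw [mem_Icc]; omega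
  have c1 : ((({2*n+2, p} : Finset ℕ) ∩ Finset.Icc 1 (2*n-1)).Nonempty ∧
      (({2*n+2, p} : Finset ℕ) \ Finset.Icc 1 (2*n-1)).Nonempty) := by
    rw [Finset.pair_comm]
    exact (crossP_iff (by omega) (by omega)).mpr ⟨by omega, by omega⟩
  have c2 : ((({2*n+1, q} : Finset ℕ) ∩ Finset.Icc 1 (2*n-1)).Nonempty ∧
      (({2*n+1, q} : Finset ℕ) \ Finset.Icc 1 (2*n-1)).Nonempty) := by
    rw [Finset.pair_comm]
    exact (crossP_iff (by omega) (by omega)).mpr ⟨by omega, by omega⟩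
  have c3 : ((({2*n, r} : Finset ℕ) ∩ Finset.Icc 1 (2*n-1)).Nonempty ∧
      (({2*n, r} : Finset ℕ) \ Finset.Icc 1 (2*n-1)).Nonempty) := by
    rw [Finset.pair_comm]
    exact (crossP_iff (by omega) (by omega)).mpr ⟨by omega, by omega⟩
  have h3 := three_le_crossAt (Finset.mem_filter.mpr ⟨hpe, c1⟩)
    (Finset.mem_filter.mpr ⟨hqe, c2⟩) (Finset.mem_filter.mpr ⟨hre, c3⟩)
    (pair_ne_left (by omega) (by omega)) (pair_ne_left (by omega) (by omega))
    (pair_ne_left (by omega) (by omega))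
  have := le_trans (crossAt_le_sockNum hk) hs
  omega

lemma surgery_matching (hn : 1 ≤ n) (h : IsRMatching 2 n M) {x c d : ℕ}
    (hcd : (c = 2*n+1 ∧ d = 2*n+2) ∨ (c = 2*n+2 ∧ d = 2*n+1))
    (hx1 : 1 ≤ x) (hx2 : x < 2*n) (hxe : ({x, 2*n} : Finset ℕ) ∈ M) :
    IsRMatching 2 (n+1) (insert ({2*n, d} : Finset ℕ)
      (insert ({x, c} : Finset ℕ) (M.erase ({x, 2*n} : Finset ℕ)))) := by
  refine ⟨?_, ?_, ?_⟩
  · intro e he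
    rcases mem_insert.mp he with rfl | he
    · exact Finset.card_pair (by omega)
    rcases mem_insert.mp he with rfl | he
    · exact Finset.card_pair (by omega)
    · exact h.1 e (Finset.mem_of_mem_erase he)
  · have key1 : ∀ g ∈ M.erase ({x, 2*n} : Finset ℕ), Disjoint ({2*n, d} : Finset ℕ) g := by
      intro g hg
      rw [Finset.disjoint_left]
      intro z hz hzg
      have hgM := Finset.mem_of_mem_erase hg
      have hgne := Finset.ne_of_mem_erase hg
      have hmem := mem_Icc.mp (edge_subset h hgM hzg)
      simp only [mem_insert, mem_singleton] at hz
      rcases hz with rfl | rfl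
      · exact hgne (edge_uniq h hgM hxe hzg (by simp))
      · omega
    have key2 : ∀ g ∈ M.erase ({x, 2*n} : Finset ℕ), Disjoint ({x, c} : Finset ℕ) g := by
      intro g hg
      rw [Finset.disjoint_left]
      intro z hz hzg
      have hgM := Finset.mem_of_mem_erase hg
      have hgne := Finset.ne_of_mem_erase hg
      have hmem := mem_Icc.mp (edge_subset h hgM hzg)
      simp only [mem_insert, mem_singleton] at hz
      rcases hz with rfl | rfl
      · exact hgne (edge_uniq h hgM hxe hzg (by simp))
      · omega
    have key3 : Disjoint ({2*n, d} : Finset ℕ) ({x, c} : Finset ℕ) := by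
      rw [Finset.disjoint_left]
      intro z hz hz'
      simp only [mem_insert, mem_singleton] at hz hz'
      omega
    intro e he f hf hne
    rcases mem_insert.mp he with rfl | he <;> rcases mem_insert.mp hf with rfl | hf
    · exact absurd rfl hne
    · rcases mem_insert.mp hf with rfl | hf
      · exact key3
      · exact key1 f hf
    · rcases mem_insert.mp he with rfl | he
      · exact key3.symm
      · exact (key1 e he).symm
    · rcases mem_insert.mp he with rfl | he <;> rcases mem_insert.mp hf with rfl | hf
      · exact absurd rfl hne
      · exact key2 f hf
      · exact (key2 e he).symm
      · exact h.2.1 e (Finset.mem_of_mem_erase he) f (Finset.mem_of_mem_erase hf) hne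
  · ext z
    simp only [mem_biUnion, id_eq, mem_Icc]
    constructor
    · rintro ⟨e, he, hz⟩
      rcases mem_insert.mp he with rfl | he
      · simp only [mem_insert, mem_singleton] at hz; omega
      rcases mem_insert.mp he with rfl | he
      · simp only [mem_insert, mem_singleton] at hz; omega
      · have := mem_Icc.mp (edge_subset h (Finset.mem_of_mem_erase he) hz)
        omega
    · intro hz
      rcases eq_or_ne z (2*n) with rfl | hz0
      · exact ⟨_, mem_insert_self _ _, by simp⟩
      rcases eq_or_ne z d with rfl | hzd
      · exact ⟨_, mem_insert_self _ _, by simp⟩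
      rcases eq_or_ne z x with rfl | hzx
      · exact ⟨_, mem_insert_of_mem (mem_insert_self _ _), by simp⟩
      rcases eq_or_ne z c with rfl | hzc
      · exact ⟨_, mem_insert_of_mem (mem_insert_self _ _), by simp⟩
      · obtain ⟨e, he, hze⟩ := exists_edge h (v := z) (by rw [mem_Icc]; omega)
        have hne : e ≠ ({x, 2*n} : Finset ℕ) := by
          intro heq
          rw [heq] at hze
          simp only [mem_insert, mem_singleton] at hze
          tauto
        exact ⟨e, mem_insert_of_mem (mem_insert_of_mem (Finset.mem_erase_of_ne_of_mem hne he)),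
          hze⟩

lemma surgery_sock (hn : 1 ≤ n) (h : IsRMatching 2 n M) {x c d : ℕ}
    (hcd : (c = 2*n+1 ∧ d = 2*n+2) ∨ (c = 2*n+2 ∧ d = 2*n+1))
    (hx1 : 1 ≤ x) (hx2 : x < 2*n) (hxe : ({x, 2*n} : Finset ℕ) ∈ M)
    (hs : sockNum n M ≤ 2) :
    sockNum (n+1) (insert ({2*n, d} : Finset ℕ)
      (insert ({x, c} : Finset ℕ) (M.erase ({x, 2*n} : Finset ℕ)))) ≤ 2 := by
  rw [sockNum_le_iff]
  intro k hk
  rw [mem_Icc] at hk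
  show (Finset.filter _ _).card ≤ 2
  rw [Finset.filter_insert, Finset.filter_insert, Finset.filter_erase]
  have hEr : ((Finset.filter (fun e => (e ∩ Finset.Icc 1 k).Nonempty ∧
        (e \ Finset.Icc 1 k).Nonempty) M).erase ({x, 2*n} : Finset ℕ)).card ≤
      (Finset.filter (fun e => (e ∩ Finset.Icc 1 k).Nonempty ∧
        (e \ Finset.Icc 1 k).Nonempty) M).card :=
    Finset.card_le_card (Finset.erase_subset _ _)
  rcases le_or_gt (2*n) k with hk2n | hk2n
  · have h0 := crossAt_zero_of_ge h hk2n
    rw [crossAt] at h0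
    split_ifs
    · exact le_trans (Finset.card_insert_le _ _)
        (by have := Finset.card_insert_le ({x, c} : Finset ℕ)
              ((Finset.filter (fun e => (e ∩ Finset.Icc 1 k).Nonempty ∧
                (e \ Finset.Icc 1 k).Nonempty) M).erase ({x, 2*n} : Finset ℕ)); omega)
    · exact le_trans (Finset.card_insert_le _ _) (by omega)
    · exact le_trans (Finset.card_insert_le _ _) (by omega)
    · omega
  · have hM2 : (Finset.filter (fun e => (e ∩ Finset.Icc 1 k).Nonempty ∧
        (e \ Finset.Icc 1 k).Nonempty) M).card ≤ 2 := by
      have := le_trans (crossAt_le_sockNum (k := k) (n := n) (by rw [mem_Icc]; omega)) hs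
      rwa [crossAt] at this
    split_ifs with hg hf hf
    · exfalso
      have := (crossP_iff (a := 2*n) (b := d) (by omega) (by omega)).mp hg
      omega
    · exfalso
      have := (crossP_iff (a := 2*n) (b := d) (by omega) (by omega)).mp hg
      omega
    · have hf' := (crossP_iff (a := x) (b := c) (by omega) (by omega)).mp hf
      have he0 : ({x, 2*n} : Finset ℕ) ∈ Finset.filter (fun e =>
          (e ∩ Finset.Icc 1 k).Nonempty ∧ (e \ Finset.Icc 1 k).Nonempty) M :=
        Finset.mem_filter.mpr ⟨hxe, (crossP_iff (by omega) (by omega)).mpr ⟨hf'.1, hk2n⟩⟩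
      have hcard := Finset.card_erase_of_mem he0
      have hpos : 0 < (Finset.filter (fun e => (e ∩ Finset.Icc 1 k).Nonempty ∧
          (e \ Finset.Icc 1 k).Nonempty) M).card := Finset.card_pos.mpr ⟨_, he0⟩
      have := Finset.card_insert_le ({x, c} : Finset ℕ)
        ((Finset.filter (fun e => (e ∩ Finset.Icc 1 k).Nonempty ∧
          (e \ Finset.Icc 1 k).Nonempty) M).erase ({x, 2*n} : Finset ℕ))
      omega
    · omega

lemma isurgery_matching (hn : 1 ≤ n) (h : IsRMatching 2 (n+1) M') {q c d : ℕ}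
    (hcd : (c = 2*n+1 ∧ d = 2*n+2) ∨ (c = 2*n+2 ∧ d = 2*n+1))
    (hq1 : 1 ≤ q) (hq2 : q < 2*n)
    (hge : ({2*n, d} : Finset ℕ) ∈ M') (hfe : ({q, c} : Finset ℕ) ∈ M') :
    IsRMatching 2 n (insert ({q, 2*n} : Finset ℕ)
      ((M'.erase ({2*n, d} : Finset ℕ)).erase ({q, c} : Finset ℕ))) := by
  refine ⟨?_, ?_, ?_⟩
  · intro e he
    rcases mem_insert.mp he with rfl | he
    · exact Finset.card_pair (by omega)
    · exact h.1 e (Finset.mem_of_mem_erase (Finset.mem_of_mem_erase he))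
  · have key : ∀ g ∈ (M'.erase ({2*n, d} : Finset ℕ)).erase ({q, c} : Finset ℕ),
        Disjoint ({q, 2*n} : Finset ℕ) g := by
      intro g hg
      rw [Finset.disjoint_left]
      intro z hz hzg
      have hgM := Finset.mem_of_mem_erase (Finset.mem_of_mem_erase hg)
      have hne1 := Finset.ne_of_mem_erase hg
      have hne2 := Finset.ne_of_mem_erase (Finset.mem_of_mem_erase hg)
      simp only [mem_insert, mem_singleton] at hz
      rcases hz with rfl | rfl
      · exact hne1 (edge_uniq h hgM hfe hzg (by simp))
      · exact hne2 (edge_uniq h hgM hge hzg (by simp))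
    intro e he f hf hne
    rcases mem_insert.mp he with rfl | he <;> rcases mem_insert.mp hf with rfl | hf
    · exact absurd rfl hne
    · exact key f hf
    · exact (key e he).symm
    · exact h.2.1 e (Finset.mem_of_mem_erase (Finset.mem_of_mem_erase he)) f
        (Finset.mem_of_mem_erase (Finset.mem_of_mem_erase hf)) hne
  · ext z
    simp only [mem_biUnion, id_eq, mem_Icc]
    constructor
    · rintro ⟨e, he, hz⟩
      rcases mem_insert.mp he with rfl | he
      · simp only [mem_insert, mem_singleton] at hz; omega
      · have hgM := Finset.mem_of_mem_erase (Finset.mem_of_mem_erase he)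
        have hne1 := Finset.ne_of_mem_erase he
        have hne2 := Finset.ne_of_mem_erase (Finset.mem_of_mem_erase he)
        have hmem := mem_Icc.mp (edge_subset h hgM hz)
        have hzd : z ≠ d := by
          rintro rfl
          exact hne2 (edge_uniq h hgM hge hz (by simp))
        have hzc : z ≠ c := by
          rintro rfl
          exact hne1 (edge_uniq h hgM hfe hz (by simp))
        omega
    · intro hz
      rcases eq_or_ne z q with rfl | hzq
      · exact ⟨_, mem_insert_self _ _, by simp⟩
      rcases eq_or_ne z (2*n) with rfl | hz0
      · exact ⟨_, mem_insert_self _ _, by simp⟩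
      · obtain ⟨e, he, hze⟩ := exists_edge h (v := z) (by rw [mem_Icc]; omega)
        have hne1 : e ≠ ({q, c} : Finset ℕ) := by
          intro heq
          rw [heq] at hze
          simp only [mem_insert, mem_singleton] at hze
          omega
        have hne2 : e ≠ ({2*n, d} : Finset ℕ) := by
          intro heq
          rw [heq] at hze
          simp only [mem_insert, mem_singleton] at hze
          omega
        exact ⟨e, mem_insert_of_mem (Finset.mem_erase_of_ne_of_mem hne1
          (Finset.mem_erase_of_ne_of_mem hne2 he)), hze⟩

lemma isurgery_sock (hn : 1 ≤ n) (h : IsRMatching 2 (n+1) M') {q c d : ℕ}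
    (hcd : (c = 2*n+1 ∧ d = 2*n+2) ∨ (c = 2*n+2 ∧ d = 2*n+1))
    (hq1 : 1 ≤ q) (hq2 : q < 2*n)
    (hge : ({2*n, d} : Finset ℕ) ∈ M') (hfe : ({q, c} : Finset ℕ) ∈ M')
    (hs : sockNum (n+1) M' ≤ 2) :
    sockNum n (insert ({q, 2*n} : Finset ℕ)
      ((M'.erase ({2*n, d} : Finset ℕ)).erase ({q, c} : Finset ℕ))) ≤ 2 := by
  rw [sockNum_le_iff]
  intro k hk
  rw [mem_Icc] at hk
  show (Finset.filter _ _).card ≤ 2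
  rw [Finset.filter_insert, Finset.filter_erase, Finset.filter_erase]
  have hM2 : (Finset.filter (fun e => (e ∩ Finset.Icc 1 k).Nonempty ∧
      (e \ Finset.Icc 1 k).Nonempty) M').card ≤ 2 := by
    have := le_trans (crossAt_le_sockNum (k := k) (n := n+1) (by rw [mem_Icc]; omega)) hs
    rwa [crossAt] at this
  have hEr1 : ((Finset.filter (fun e => (e ∩ Finset.Icc 1 k).Nonempty ∧
      (e \ Finset.Icc 1 k).Nonempty) M').erase ({2*n, d} : Finset ℕ)).card ≤
      (Finset.filter (fun e => (e ∩ Finset.Icc 1 k).Nonempty ∧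
      (e \ Finset.Icc 1 k).Nonempty) M').card :=
    Finset.card_le_card (Finset.erase_subset _ _)
  have hEr2 : (((Finset.filter (fun e => (e ∩ Finset.Icc 1 k).Nonempty ∧
      (e \ Finset.Icc 1 k).Nonempty) M').erase ({2*n, d} : Finset ℕ)).erase
        ({q, c} : Finset ℕ)).card ≤
      ((Finset.filter (fun e => (e ∩ Finset.Icc 1 k).Nonempty ∧
      (e \ Finset.Icc 1 k).Nonempty) M').erase ({2*n, d} : Finset ℕ)).card :=
    Finset.card_le_card (Finset.erase_subset _ _)
  split_ifs with hnew
  · have hnew' := (crossP_iff (a := q) (b := 2*n) (by omega) (by omega)).mp hnew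
    have hfF : ({q, c} : Finset ℕ) ∈ (Finset.filter (fun e =>
        (e ∩ Finset.Icc 1 k).Nonempty ∧ (e \ Finset.Icc 1 k).Nonempty) M').erase
        ({2*n, d} : Finset ℕ) := by
      refine Finset.mem_erase_of_ne_of_mem (pair_ne_left (by omega) (by omega)) ?_
      exact Finset.mem_filter.mpr ⟨hfe, (crossP_iff (by omega) (by omega)).mpr
        ⟨hnew'.1, by omega⟩⟩
    have hcard := Finset.card_erase_of_mem hfF
    have hpos : 0 < ((Finset.filter (fun e => (e ∩ Finset.Icc 1 k).Nonempty ∧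
        (e \ Finset.Icc 1 k).Nonempty) M').erase ({2*n, d} : Finset ℕ)).card :=
      Finset.card_pos.mpr ⟨_, hfF⟩
    have := Finset.card_insert_le ({q, 2*n} : Finset ℕ)
      (((Finset.filter (fun e => (e ∩ Finset.Icc 1 k).Nonempty ∧
        (e \ Finset.Icc 1 k).Nonempty) M').erase ({2*n, d} : Finset ℕ)).erase
        ({q, c} : Finset ℕ))
    omega
  · omega

end surgery

section assemble
variable {n : ℕ} {M M' : Finset (Finset ℕ)}

noncomputable def jFun (n : ℕ) (p : Finset (Finset ℕ) × Fin 3) : Finset (Finset ℕ) :=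
  if p.2 = 0 then insert ({2*n+1, 2*n+2} : Finset ℕ) p.1
  else if p.2 = 1 then
    insert ({2*n, 2*n+2} : Finset ℕ) (insert ({pmate p.1 (2*n), 2*n+1} : Finset ℕ)
      (p.1.erase ({pmate p.1 (2*n), 2*n} : Finset ℕ)))
  else
    insert ({2*n, 2*n+1} : Finset ℕ) (insert ({pmate p.1 (2*n), 2*n+2} : Finset ℕ)
      (p.1.erase ({pmate p.1 (2*n), 2*n} : Finset ℕ)))

noncomputable def iFun (n : ℕ) (M' : Finset (Finset ℕ)) : Finset (Finset ℕ) × Fin 3 :=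
  if ({2*n+1, 2*n+2} : Finset ℕ) ∈ M' then (M'.erase ({2*n+1, 2*n+2} : Finset ℕ), 0)
  else if ({2*n, 2*n+2} : Finset ℕ) ∈ M' then
    (insert ({pmate M' (2*n+1), 2*n} : Finset ℕ)
      ((M'.erase ({2*n, 2*n+2} : Finset ℕ)).erase ({pmate M' (2*n+1), 2*n+1} : Finset ℕ)), 1)
  else
    (insert ({pmate M' (2*n+2), 2*n} : Finset ℕ)
      ((M'.erase ({2*n, 2*n+1} : Finset ℕ)).erase ({pmate M' (2*n+2), 2*n+2} : Finset ℕ)), 2)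

lemma jFun_zero (n : ℕ) (M : Finset (Finset ℕ)) :
    jFun n (M, 0) = insert ({2*n+1, 2*n+2} : Finset ℕ) M := by
  rw [jFun]; simp

lemma jFun_one (n : ℕ) (M : Finset (Finset ℕ)) :
    jFun n (M, 1) = insert ({2*n, 2*n+2} : Finset ℕ)
      (insert ({pmate M (2*n), 2*n+1} : Finset ℕ)
        (M.erase ({pmate M (2*n), 2*n} : Finset ℕ))) := by
  rw [jFun]; simp

lemma jFun_two (n : ℕ) (M : Finset (Finset ℕ)) :
    jFun n (M, 2) = insert ({2*n, 2*n+1} : Finset ℕ)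
      (insert ({pmate M (2*n), 2*n+2} : Finset ℕ)
        (M.erase ({pmate M (2*n), 2*n} : Finset ℕ))) := by
  rw [jFun]; simp

lemma x_facts (hn : 1 ≤ n) (h : IsRMatching 2 n M) :
    1 ≤ pmate M (2*n) ∧ pmate M (2*n) < 2*n ∧ ({pmate M (2*n), 2*n} : Finset ℕ) ∈ M := by
  obtain ⟨he, hne, hm⟩ := pmate_spec h (v := 2*n) (by rw [mem_Icc]; omega)
  rw [mem_Icc] at hm
  rw [Finset.pair_comm] at he
  exact ⟨by omega, by omega, he⟩

lemma q_facts (hn : 1 ≤ n) (h : IsRMatching 2 (n+1) M')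
    (hA : ({2*n+1, 2*n+2} : Finset ℕ) ∉ M') (hB : ({2*n, 2*n+2} : Finset ℕ) ∈ M') :
    1 ≤ pmate M' (2*n+1) ∧ pmate M' (2*n+1) < 2*n ∧
      ({pmate M' (2*n+1), 2*n+1} : Finset ℕ) ∈ M' := by
  obtain ⟨he, hne, hm⟩ := pmate_spec h (v := 2*n+1) (by rw [mem_Icc]; omega)
  set q := pmate M' (2*n+1) with hq
  rw [mem_Icc] at hm
  have h2 : q ≠ 2*n+2 := by
    rintro h2; rw [h2] at he; exact hA he
  have h0 : q ≠ 2*n := by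
    rintro h0
    rw [h0] at he
    have := edge_uniq h he hB (show (2*n : ℕ) ∈ ({2*n+1, 2*n} : Finset ℕ) by simp) (by simp)
    have : (2*n+1 : ℕ) ∈ ({2*n, 2*n+2} : Finset ℕ) := this ▸ (by simp)
    simp only [mem_insert, mem_singleton] at this
    omega
  rw [Finset.pair_comm] at he
  exact ⟨by omega, by omega, he⟩

lemma p_facts (hn : 1 ≤ n) (h : IsRMatching 2 (n+1) M')
    (hA : ({2*n+1, 2*n+2} : Finset ℕ) ∉ M') (hB : ({2*n, 2*n+2} : Finset ℕ) ∉ M') :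
    1 ≤ pmate M' (2*n+2) ∧ pmate M' (2*n+2) < 2*n ∧
      ({pmate M' (2*n+2), 2*n+2} : Finset ℕ) ∈ M' := by
  obtain ⟨he, hne, hm⟩ := pmate_spec h (v := 2*n+2) (by rw [mem_Icc]; omega)
  set p := pmate M' (2*n+2) with hp
  rw [mem_Icc] at hm
  have h2 : p ≠ 2*n+1 := by
    rintro h2; rw [h2, Finset.pair_comm] at he; exact hA he
  have h0 : p ≠ 2*n := by
    rintro h0; rw [h0, Finset.pair_comm] at he; exact hB he
  rw [Finset.pair_comm] at he
  exact ⟨by omega, by omega, he⟩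

lemma iFun_mem (hn : 1 ≤ n) (hM' : M' ∈ good (n+1) 2) :
    iFun n M' ∈ (good n 2) ×ˢ (Finset.univ : Finset (Fin 3)) := by
  rw [mem_good] at hM'
  obtain ⟨hm, hs⟩ := hM'
  rw [iFun]
  split_ifs with hA hB
  · rw [Finset.mem_product]
    exact ⟨mem_good.mpr ⟨i0_matching hm hA, sockNum_i0 hm hs⟩, Finset.mem_univ _⟩
  · obtain ⟨hq1, hq2, hqe⟩ := q_facts hn hm hA hB
    rw [Finset.mem_product]
    exact ⟨mem_good.mpr ⟨isurgery_matching hn hm (Or.inl ⟨rfl, rfl⟩) hq1 hq2 hB hqe,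
      isurgery_sock hn hm (Or.inl ⟨rfl, rfl⟩) hq1 hq2 hB hqe hs⟩, Finset.mem_univ _⟩
  · have hC := classify hn hm hs hA hB
    obtain ⟨hp1, hp2, hpe⟩ := p_facts hn hm hA hB
    rw [Finset.mem_product]
    exact ⟨mem_good.mpr ⟨isurgery_matching hn hm (Or.inr ⟨rfl, rfl⟩) hp1 hp2 hC hpe,
      isurgery_sock hn hm (Or.inr ⟨rfl, rfl⟩) hp1 hp2 hC hpe hs⟩, Finset.mem_univ _⟩

lemma jFun_mem (hn : 1 ≤ n) {p : Finset (Finset ℕ) × Fin 3}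
    (hp : p ∈ (good n 2) ×ˢ (Finset.univ : Finset (Fin 3))) :
    jFun n p ∈ good (n+1) 2 := by
  obtain ⟨M, t⟩ := p
  rw [Finset.mem_product, mem_good] at hp
  obtain ⟨⟨hm, hs⟩, -⟩ := hp
  rw [jFun]
  split_ifs with h0 h1
  · exact mem_good.mpr ⟨j0_matching hm, sockNum_j0 hm (by norm_num) hs⟩
  · obtain ⟨hx1, hx2, hxe⟩ := x_facts hn hm
    exact mem_good.mpr ⟨surgery_matching hn hm (Or.inl ⟨rfl, rfl⟩) hx1 hx2 hxe,
      surgery_sock hn hm (Or.inl ⟨rfl, rfl⟩) hx1 hx2 hxe hs⟩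
  · obtain ⟨hx1, hx2, hxe⟩ := x_facts hn hm
    exact mem_good.mpr ⟨surgery_matching hn hm (Or.inr ⟨rfl, rfl⟩) hx1 hx2 hxe,
      surgery_sock hn hm (Or.inr ⟨rfl, rfl⟩) hx1 hx2 hxe hs⟩

lemma left_inv (hn : 1 ≤ n) (hM' : M' ∈ good (n+1) 2) : jFun n (iFun n M') = M' := by
  rw [mem_good] at hM'
  obtain ⟨hm, hs⟩ := hM'
  rw [iFun]
  split_ifs with hA hB
  · rw [jFun_zero]
    exact Finset.insert_erase hA
  · obtain ⟨hq1, hq2, hqe⟩ := q_facts hn hm hA hB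
    set q := pmate M' (2*n+1) with hqdef
    have hMm : IsRMatching 2 n (insert ({q, 2*n} : Finset ℕ)
        ((M'.erase ({2*n, 2*n+2} : Finset ℕ)).erase ({q, 2*n+1} : Finset ℕ))) :=
      isurgery_matching hn hm (Or.inl ⟨rfl, rfl⟩) hq1 hq2 hB hqe
    rw [jFun_one]
    have hx : pmate (insert ({q, 2*n} : Finset ℕ)
        ((M'.erase ({2*n, 2*n+2} : Finset ℕ)).erase ({q, 2*n+1} : Finset ℕ))) (2*n) = q := by
      have h1 : ({2*n, q} : Finset ℕ) ∈ insert ({q, 2*n} : Finset ℕ)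
          ((M'.erase ({2*n, 2*n+2} : Finset ℕ)).erase ({q, 2*n+1} : Finset ℕ)) := by
        rw [Finset.pair_comm (2*n) q]
        exact mem_insert_self _ _
      exact pmate_eq hMm h1 (by omega)
    rw [hx]
    have e1 : (insert ({q, 2*n} : Finset ℕ)
        ((M'.erase ({2*n, 2*n+2} : Finset ℕ)).erase ({q, 2*n+1} : Finset ℕ))).erase
        ({q, 2*n} : Finset ℕ) =
        (M'.erase ({2*n, 2*n+2} : Finset ℕ)).erase ({q, 2*n+1} : Finset ℕ) := by
      apply Finset.erase_insert
      intro hc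
      have hcM := Finset.mem_of_mem_erase (Finset.mem_of_mem_erase hc)
      have := edge_uniq hm hcM hqe (show q ∈ ({q, 2*n} : Finset ℕ) by simp) (by simp)
      have : (2*n : ℕ) ∈ ({q, 2*n+1} : Finset ℕ) := this ▸ (by simp)
      simp only [mem_insert, mem_singleton] at this
      omega
    rw [e1]
    have e2 : insert ({q, 2*n+1} : Finset ℕ)
        ((M'.erase ({2*n, 2*n+2} : Finset ℕ)).erase ({q, 2*n+1} : Finset ℕ)) =
        M'.erase ({2*n, 2*n+2} : Finset ℕ) :=
      Finset.insert_erase (Finset.mem_erase_of_ne_of_mem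
        (pair_ne_left (by omega) (by omega)) hqe)
    rw [e2]
    exact Finset.insert_erase hB
  · have hC := classify hn hm hs hA hB
    obtain ⟨hp1, hp2, hpe⟩ := p_facts hn hm hA hB
    set p := pmate M' (2*n+2) with hpdef
    have hMm : IsRMatching 2 n (insert ({p, 2*n} : Finset ℕ)
        ((M'.erase ({2*n, 2*n+1} : Finset ℕ)).erase ({p, 2*n+2} : Finset ℕ))) :=
      isurgery_matching hn hm (Or.inr ⟨rfl, rfl⟩) hp1 hp2 hC hpe
    rw [jFun_two]
    have hx : pmate (insert ({p, 2*n} : Finset ℕ)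
        ((M'.erase ({2*n, 2*n+1} : Finset ℕ)).erase ({p, 2*n+2} : Finset ℕ))) (2*n) = p := by
      have h1 : ({2*n, p} : Finset ℕ) ∈ insert ({p, 2*n} : Finset ℕ)
          ((M'.erase ({2*n, 2*n+1} : Finset ℕ)).erase ({p, 2*n+2} : Finset ℕ)) := by
        rw [Finset.pair_comm (2*n) p]
        exact mem_insert_self _ _
      exact pmate_eq hMm h1 (by omega)
    rw [hx]
    have e1 : (insert ({p, 2*n} : Finset ℕ)
        ((M'.erase ({2*n, 2*n+1} : Finset ℕ)).erase ({p, 2*n+2} : Finset ℕ))).erase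
        ({p, 2*n} : Finset ℕ) =
        (M'.erase ({2*n, 2*n+1} : Finset ℕ)).erase ({p, 2*n+2} : Finset ℕ) := by
      apply Finset.erase_insert
      intro hc
      have hcM := Finset.mem_of_mem_erase (Finset.mem_of_mem_erase hc)
      have := edge_uniq hm hcM hpe (show p ∈ ({p, 2*n} : Finset ℕ) by simp) (by simp)
      have : (2*n : ℕ) ∈ ({p, 2*n+2} : Finset ℕ) := this ▸ (by simp)
      simp only [mem_insert, mem_singleton] at this
      omega
    rw [e1]
    have e2 : insert ({p, 2*n+2} : Finset ℕ)
        ((M'.erase ({2*n, 2*n+1} : Finset ℕ)).erase ({p, 2*n+2} : Finset ℕ)) =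
        M'.erase ({2*n, 2*n+1} : Finset ℕ) :=
      Finset.insert_erase (Finset.mem_erase_of_ne_of_mem
        (pair_ne_left (by omega) (by omega)) hpe)
    rw [e2]
    exact Finset.insert_erase hC

lemma right_inv (hn : 1 ≤ n) {p : Finset (Finset ℕ) × Fin 3}
    (hp : p ∈ (good n 2) ×ˢ (Finset.univ : Finset (Fin 3))) : iFun n (jFun n p) = p := by
  obtain ⟨M, t⟩ := p
  rw [Finset.mem_product, mem_good] at hp
  obtain ⟨⟨hm, hs⟩, -⟩ := hp
  obtain ⟨hx1, hx2, hxe⟩ := x_facts hn hm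
  set x := pmate M (2*n) with hxdef
  fin_cases t
  · show iFun n (jFun n (M, 0)) = (M, 0)
    rw [jFun_zero]
    rw [iFun, if_pos (mem_insert_self _ _)]
    rw [Finset.erase_insert (pair_notmem_right hm (by omega))]
  · show iFun n (jFun n (M, 1)) = (M, 1)
    rw [jFun_one, ← hxdef]
    have hA' : ({2*n+1, 2*n+2} : Finset ℕ) ∉ insert ({2*n, 2*n+2} : Finset ℕ)
        (insert ({x, 2*n+1} : Finset ℕ) (M.erase ({x, 2*n} : Finset ℕ))) := by
      intro hc
      rcases mem_insert.mp hc with hc | hc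
      · exact pair_ne_left (by omega) (by omega) hc
      rcases mem_insert.mp hc with hc | hc
      · exact pair_ne_right (by omega) (by omega) hc
      · exact pair_notmem_right hm (by omega) (Finset.mem_of_mem_erase hc)
    have hB' : ({2*n, 2*n+2} : Finset ℕ) ∈ insert ({2*n, 2*n+2} : Finset ℕ)
        (insert ({x, 2*n+1} : Finset ℕ) (M.erase ({x, 2*n} : Finset ℕ))) :=
      mem_insert_self _ _
    rw [iFun, if_neg hA', if_pos hB']
    have hMm : IsRMatching 2 (n+1) (insert ({2*n, 2*n+2} : Finset ℕ)
        (insert ({x, 2*n+1} : Finset ℕ) (M.erase ({x, 2*n} : Finset ℕ)))) :=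
      surgery_matching hn hm (Or.inl ⟨rfl, rfl⟩) hx1 hx2 hxe
    have hq : pmate (insert ({2*n, 2*n+2} : Finset ℕ)
        (insert ({x, 2*n+1} : Finset ℕ) (M.erase ({x, 2*n} : Finset ℕ)))) (2*n+1) = x := by
      have h1 : ({2*n+1, x} : Finset ℕ) ∈ insert ({2*n, 2*n+2} : Finset ℕ)
          (insert ({x, 2*n+1} : Finset ℕ) (M.erase ({x, 2*n} : Finset ℕ))) := by
        rw [Finset.pair_comm (2*n+1) x]
        exact mem_insert_of_mem (mem_insert_self _ _)
      exact pmate_eq hMm h1 (by omega)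
    rw [hq]
    have e1 : (insert ({2*n, 2*n+2} : Finset ℕ)
        (insert ({x, 2*n+1} : Finset ℕ) (M.erase ({x, 2*n} : Finset ℕ)))).erase
        ({2*n, 2*n+2} : Finset ℕ) =
        insert ({x, 2*n+1} : Finset ℕ) (M.erase ({x, 2*n} : Finset ℕ)) := by
      apply Finset.erase_insert
      intro hc
      rcases mem_insert.mp hc with hc | hc
      · exact pair_ne_right (by omega) (by omega) hc
      · exact pair_notmem_right hm (by omega) (Finset.mem_of_mem_erase hc)
    have e2 : (insert ({x, 2*n+1} : Finset ℕ) (M.erase ({x, 2*n} : Finset ℕ))).erase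
        ({x, 2*n+1} : Finset ℕ) = M.erase ({x, 2*n} : Finset ℕ) := by
      apply Finset.erase_insert
      intro hc
      exact pair_notmem_right hm (by omega) (Finset.mem_of_mem_erase hc)
    rw [e1, e2, Finset.insert_erase hxe]
  · show iFun n (jFun n (M, 2)) = (M, 2)
    rw [jFun_two, ← hxdef]
    have hA' : ({2*n+1, 2*n+2} : Finset ℕ) ∉ insert ({2*n, 2*n+1} : Finset ℕ)
        (insert ({x, 2*n+2} : Finset ℕ) (M.erase ({x, 2*n} : Finset ℕ))) := by
      intro hc
      rcases mem_insert.mp hc with hc | hc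
      · exact pair_ne_right (by omega) (by omega) hc
      rcases mem_insert.mp hc with hc | hc
      · exact pair_ne_left (by omega) (by omega) hc
      · exact pair_notmem_right hm (by omega) (Finset.mem_of_mem_erase hc)
    have hB' : ({2*n, 2*n+2} : Finset ℕ) ∉ insert ({2*n, 2*n+1} : Finset ℕ)
        (insert ({x, 2*n+2} : Finset ℕ) (M.erase ({x, 2*n} : Finset ℕ))) := by
      intro hc
      rcases mem_insert.mp hc with hc | hc
      · exact pair_ne_right (by omega) (by omega) hc
      rcases mem_insert.mp hc with hc | hc
      · exact pair_ne_left (by omega) (by omega) hc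
      · exact pair_notmem_right hm (by omega) (Finset.mem_of_mem_erase hc)
    rw [iFun, if_neg hA', if_neg hB']
    have hMm : IsRMatching 2 (n+1) (insert ({2*n, 2*n+1} : Finset ℕ)
        (insert ({x, 2*n+2} : Finset ℕ) (M.erase ({x, 2*n} : Finset ℕ)))) :=
      surgery_matching hn hm (Or.inr ⟨rfl, rfl⟩) hx1 hx2 hxe
    have hq : pmate (insert ({2*n, 2*n+1} : Finset ℕ)
        (insert ({x, 2*n+2} : Finset ℕ) (M.erase ({x, 2*n} : Finset ℕ)))) (2*n+2) = x := by
      have h1 : ({2*n+2, x} : Finset ℕ) ∈ insert ({2*n, 2*n+1} : Finset ℕ)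
          (insert ({x, 2*n+2} : Finset ℕ) (M.erase ({x, 2*n} : Finset ℕ))) := by
        rw [Finset.pair_comm (2*n+2) x]
        exact mem_insert_of_mem (mem_insert_self _ _)
      exact pmate_eq hMm h1 (by omega)
    rw [hq]
    have e1 : (insert ({2*n, 2*n+1} : Finset ℕ)
        (insert ({x, 2*n+2} : Finset ℕ) (M.erase ({x, 2*n} : Finset ℕ)))).erase
        ({2*n, 2*n+1} : Finset ℕ) =
        insert ({x, 2*n+2} : Finset ℕ) (M.erase ({x, 2*n} : Finset ℕ)) := by
      apply Finset.erase_insert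
      intro hc
      rcases mem_insert.mp hc with hc | hc
      · exact pair_ne_right (by omega) (by omega) hc
      · exact pair_notmem_right hm (by omega) (Finset.mem_of_mem_erase hc)
    have e2 : (insert ({x, 2*n+2} : Finset ℕ) (M.erase ({x, 2*n} : Finset ℕ))).erase
        ({x, 2*n+2} : Finset ℕ) = M.erase ({x, 2*n} : Finset ℕ) := by
      apply Finset.erase_insert
      intro hc
      exact pair_notmem_right hm (by omega) (Finset.mem_of_mem_erase hc)
    rw [e1, e2, Finset.insert_erase hxe]

lemma step2 (hn : 1 ≤ n) : (good (n+1) 2).card = 3 * (good n 2).card := by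
  have key : (good (n+1) 2).card = ((good n 2) ×ˢ (Finset.univ : Finset (Fin 3))).card :=
    Finset.card_bij' (fun M' _ => iFun n M') (fun p _ => jFun n p)
      (fun M' hM' => iFun_mem hn hM') (fun p hp => jFun_mem hn hp)
      (fun M' hM' => left_inv hn hM') (fun p hp => right_inv hn hp)
  rw [key, Finset.card_product]
  simp [Finset.card_univ, mul_comm]

lemma card_good_two (hn : 1 ≤ n) : (good n 2).card = 3 ^ (n - 1) := by
  induction n, hn using Nat.le_induction with
  | base => rw [good_one (by norm_num)]; simp
  | succ m hm ih =>
    rw [step2 hm, ih]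
    have hm1 : m - 1 + 1 = m := by omega
    calc 3 * 3 ^ (m - 1) = 3 ^ (m - 1 + 1) := (pow_succ' 3 (m - 1)).symm
      _ = 3 ^ m := by rw [hm1]
      _ = 3 ^ (m + 1 - 1) := by rw [Nat.add_sub_cancel]

end assemble

theorem stmt16 (n : ℕ) (hn : 1 ≤ n) :
    ((matchings 2 n).filter (fun M => sockNum n M = 2)).card = 3 ^ (n - 1) - 1 := by
  have hEq : (matchings 2 n).filter (fun M => sockNum n M = 2) =
      good n 2 \ good n 1 := by
    ext M
    simp only [mem_filter, Finset.mem_sdiff, mem_good, good, mem_filter, mem_matchings]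
    constructor
    · rintro ⟨hm, h2⟩
      exact ⟨⟨hm, by omega⟩, by rintro ⟨-, h1⟩; omega⟩
    · rintro ⟨⟨hm, h2⟩, hn1⟩
      have : ¬ (sockNum n M ≤ 1) := fun hx => hn1 ⟨hm, hx⟩
      exact ⟨hm, by omega⟩
  have hsub : good n 1 ⊆ good n 2 := by
    intro M hM
    rw [mem_good] at hM ⊢
    exact ⟨hM.1, by omega⟩
  rw [hEq, Finset.card_sdiff_of_subset hsub, card_good_two hn, card_good_one hn]
end
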